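/- arXiv:2411.08749 — 3 statements merged into one kernel-verified Lean document; each statement's English description precedes it below -/
import Mathlib

section
/- Let Λ be a free abelian group of finite rank, let a_0 = 0, a_1, …, a_r ∈ Λ and b_0 = 0, b_1, …, b_k ∈ Λ, and set L = ⋃_{i=0}^{r} (a_i + 2Λ) and L' = ⋃_{j=0}^{k} (b_j + 2Λ). Let H be a maximal proper subgroup of Λ whose index in Λ is different from 2, and assume H ∩ L ⊆ L'. Then L ⊆ L'. In particular, if the cosets a_0 + 2Λ, …, a_r + 2Λ are pairwise distinct and the cosets b_0 + 2Λ, …, b_k + 2Λ are pairwise distinct, then k ≥ r. -/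
/-- Let `Λ` be a free abelian group of finite rank, `L = ⋃ᵢ (aᵢ + 2Λ)`,
`L' = ⋃ⱼ (bⱼ + 2Λ)` with `a 0 = b 0 = 0`.  Let `H` be a maximal proper subgroup of `Λ`
of index different from `2` with `H ∩ L ⊆ L'`.  Then `L ⊆ L'`; in particular if the
cosets defining `L` (resp. `L'`) are pairwise distinct, then `k ≥ r`. -/
theorem stmt_1 (Λ : Type*) [AddCommGroup Λ] [Module.Free ℤ Λ] [Module.Finite ℤ Λ]
    (r k : ℕ) (a : Fin (r + 1) → Λ) (b : Fin (k + 1) → Λ)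
    (ha0 : a 0 = 0) (hb0 : b 0 = 0)
    (L L' : Set Λ)
    (hL : L = ⋃ i : Fin (r + 1), {x | ∃ z : Λ, x = a i + 2 • z})
    (hL' : L' = ⋃ j : Fin (k + 1), {x | ∃ z : Λ, x = b j + 2 • z})
    (H : AddSubgroup Λ) (hHne : H ≠ ⊤)
    (hHmax : ∀ N : AddSubgroup Λ, H ≤ N → N = H ∨ N = ⊤)
    (hHidx : H.index ≠ 2)
    (hsub : (H : Set Λ) ∩ L ⊆ L') :
    L ⊆ L' ∧
      ((∀ i j : Fin (r + 1), (∃ z : Λ, a i - a j = 2 • z) → i = j) →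
       (∀ i j : Fin (k + 1), (∃ z : Λ, b i - b j = 2 • z) → i = j) →
       r ≤ k) := by
  -- The subgroup 2Λ
  set K : AddSubgroup Λ :=
    { carrier := {x | ∃ z : Λ, x = 2 • z}
      zero_mem' := ⟨0, by simp⟩
      add_mem' := by rintro x y ⟨u, rfl⟩ ⟨v, rfl⟩; exact ⟨u + v, by rw [smul_add]⟩
      neg_mem' := by rintro x ⟨u, rfl⟩; exact ⟨-u, by simp⟩ } with hK
  -- Key: H ⊔ K = ⊤
  have hsup : H ⊔ K = ⊤ := by
    rcases hHmax (H ⊔ K) le_sup_left with h | h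
    · -- then K ≤ H and H would have index 2
      exfalso
      have hKH : K ≤ H := h ▸ le_sup_right
      obtain ⟨x, hx⟩ : ∃ x, x ∉ H := by
        by_contra hc
        push_neg at hc
        exact hHne (AddSubgroup.eq_top_iff' H |>.2 hc)
      have hxx : x + x ∈ H := by
        have : (2 : ℕ) • x ∈ K := ⟨x, rfl⟩
        simpa [two_nsmul] using hKH this
      -- H ⊔ closure {x} = ⊤
      have htop : H ⊔ AddSubgroup.closure {x} = ⊤ := by
        rcases hHmax (H ⊔ AddSubgroup.closure {x}) le_sup_left with h' | h'
        · exact absurd (h' ▸ le_sup_right (α := AddSubgroup Λ) (AddSubgroup.subset_closure (Set.mem_singleton x)) : x ∈ H) hx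
        · exact h'
      have hdecomp : ∀ y : Λ, ∃ h ∈ H, ∃ n : ℤ, h + n • x = y := by
        intro y
        have : y ∈ H ⊔ AddSubgroup.closure {x} := htop ▸ AddSubgroup.mem_top y
        rw [AddSubgroup.mem_sup] at this
        obtain ⟨h1, hh1, c, hc, hyc⟩ := this
        rw [AddSubgroup.mem_closure_singleton] at hc
        obtain ⟨n, rfl⟩ := hc
        exact ⟨h1, hh1, n, hyc⟩
      have heven : ∀ n : ℤ, Even n → n • x ∈ H := by
        rintro n ⟨m, rfl⟩
        have : (m + m) • x = m • (x + x) := by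
          rw [add_zsmul, smul_add]
        rw [this]
        exact AddSubgroup.zsmul_mem H hxx m
      apply hHidx
      rw [AddSubgroup.index_eq_two_iff]
      refine ⟨x, fun y => ?_⟩
      obtain ⟨h1, hh1, n, rfl⟩ := hdecomp y
      rcases Int.even_or_odd n with he | ho
      · refine Or.inr ⟨AddSubgroup.add_mem H hh1 (heven n he), fun hmem => hx ?_⟩
        have : h1 + n • x + x - (h1 + n • x) ∈ H := AddSubgroup.sub_mem H hmem (AddSubgroup.add_mem H hh1 (heven n he))
        simpa using this
      · have hne : (n + 1) • x ∈ H := heven _ (by rcases ho with ⟨m, rfl⟩; exact ⟨m + 1, by ring⟩)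
        have hmem : h1 + n • x + x ∈ H := by
          have : h1 + n • x + x = h1 + (n + 1) • x := by rw [add_zsmul, one_zsmul, add_assoc]
          rw [this]; exact AddSubgroup.add_mem H hh1 hne
        refine Or.inl ⟨hmem, fun hy => hx ?_⟩
        have : h1 + n • x + x - (h1 + n • x) ∈ H := AddSubgroup.sub_mem H hmem hy
        simpa using this
    · exact h
  -- main inclusion
  have hmain : L ⊆ L' := by
    intro x hx
    rw [hL] at hx
    obtain ⟨_, ⟨i, rfl⟩, z, rfl⟩ := hx
    have : a i + 2 • z ∈ H ⊔ K := hsup ▸ AddSubgroup.mem_top _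
    rw [AddSubgroup.mem_sup] at this
    obtain ⟨h1, hh1, c, ⟨u, rfl⟩, hyc⟩ := this
    have hh1L : h1 ∈ L := by
      rw [hL]
      refine Set.mem_iUnion.2 ⟨i, z - u, ?_⟩
      have : h1 = a i + 2 • z - 2 • u := by
        rw [← hyc]; abel
      rw [this, smul_sub]; abel
    have hh1L' : h1 ∈ L' := hsub ⟨hh1, hh1L⟩
    rw [hL'] at hh1L' ⊢
    obtain ⟨_, ⟨j, rfl⟩, w, hw⟩ := hh1L'
    refine Set.mem_iUnion.2 ⟨j, w + u, ?_⟩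
    rw [← hyc, hw, smul_add]; abel
  refine ⟨hmain, fun hda _ => ?_⟩
  -- cardinality part
  have hf : ∀ i : Fin (r + 1), ∃ j : Fin (k + 1), ∃ w : Λ, a i = b j + 2 • w := by
    intro i
    have : a i ∈ L := by
      rw [hL]; exact Set.mem_iUnion.2 ⟨i, 0, by simp⟩
    have := hmain this
    rw [hL'] at this
    obtain ⟨_, ⟨j, rfl⟩, w, hw⟩ := this
    exact ⟨j, w, hw⟩
  choose f w hfw using hf
  have hfi : Function.Injective f := by
    intro i i' hii
    apply hda
    refine ⟨w i - w i', ?_⟩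
    rw [hfw i, hfw i', hii, smul_sub]; abel
  have := Fintype.card_le_of_injective f hfi
  simpa using this
end

section
/- Fix an integer n ≥ 2 and let B_n = {±e_i : 1 ≤ i ≤ n} ∪ {±e_i ± e_j : 1 ≤ i < j ≤ n} ⊆ ℝ^n. For a subset J ⊆ {1,…,n} let Ψ_J := {±e_i : 1 ≤ i ≤ n} ∪ {±e_i ± e_j : i ≠ j, and either both i,j ∈ J or both i,j ∉ J}. Then: (1) for every nonempty proper subset J ⊊ {1,…,n}, Ψ_J is a maximal root subsystem of B_n; (2) every maximal root subsystem Ψ of B_n with Ψ ∩ {±e_i : 1 ≤ i ≤ n} ≠ ∅ equals Ψ_J for some nonempty proper subset J ⊊ {1,…,n}. -/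
/-!
Reflections in roots of `B_n` act on the standard basis as signed permutations: `s_{e_i}` negates
`e_i`, and `s_{e_i ± e_j}` exchanges `e_i` and `e_j` up to sign. When the permutation preserves
`J`, such a map preserves `Ψ_J`, so `Ψ_J` is a root subsystem.

If a root subsystem `Ψ` contains every `e_i`, it contains all sign variants of its long roots, and
"`i = j` or `e_i + e_j ∈ Ψ`" is an equivalence relation on indices. A subsystem strictly containing
`Ψ_J` links `J` to its complement, hence links all indices and is all of `B_n`. Conversely a proper
subsystem containing every `e_i` lies in `Ψ_J` for `J` an equivalence class, while one that misses
some `e_j` lies in `Ψ_J` for `J = {i | e_i ∈ Ψ}`, since reflecting `e_i` in `±e_i ± e_j` gives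
`±e_j`. Maximality turns these inclusions into equalities.
-/

open RealInnerProductSpace

noncomputable section

/-- The standard basis vector `e i` of `ℝ^n`. -/
def ee (n : ℕ) (i : Fin n) : EuclideanSpace ℝ (Fin n) := EuclideanSpace.single i 1

/-- The set `{±e_i : 1 ≤ i ≤ n}`. -/
def pmE (n : ℕ) : Set (EuclideanSpace ℝ (Fin n)) :=
  {v | ∃ i : Fin n, v = ee n i ∨ v = -ee n i}

/-- The set `{±e_i ± e_j : i ≠ j}`. -/
def pmEE (n : ℕ) : Set (EuclideanSpace ℝ (Fin n)) :=
  {v | ∃ i j : Fin n, i ≠ j ∧ ∃ ε δ : ℝ, (ε = 1 ∨ ε = -1) ∧ (δ = 1 ∨ δ = -1) ∧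
    v = ε • ee n i + δ • ee n j}

/-- The set `{±2e_i : 1 ≤ i ≤ n}`. -/
def pm2E (n : ℕ) : Set (EuclideanSpace ℝ (Fin n)) :=
  {v | ∃ i : Fin n, v = (2 : ℝ) • ee n i ∨ v = -((2 : ℝ) • ee n i)}

/-- The reflection `s_α(β) = β − (2⟨β,α⟩/⟨α,α⟩)α`. -/
def reflV {V : Type*} [NormedAddCommGroup V] [InnerProductSpace ℝ V] (α β : V) : V :=
  β - (2 * ⟪β, α⟫ / ⟪α, α⟫) • α

/-- A root subsystem of `Φ` (w.r.t. a given reflection map): a nonempty subset of `Φ`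
closed under the reflections in its own elements. -/
def IsRootSubsystem {X : Type*} (refl : X → X → X) (Φ Ψ : Set X) : Prop :=
  Ψ.Nonempty ∧ Ψ ⊆ Φ ∧ ∀ a ∈ Ψ, ∀ b ∈ Ψ, refl a b ∈ Ψ

/-- A maximal root subsystem of `Φ`: a proper root subsystem such that every root
subsystem `Ψ'` with `Ψ ⊆ Ψ' ≠ Φ` equals `Ψ`. -/
def IsMaximalRootSubsystem {X : Type*} (refl : X → X → X) (Φ Ψ : Set X) : Prop :=
  IsRootSubsystem refl Φ Ψ ∧ Ψ ≠ Φ ∧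
    ∀ Ψ' : Set X, IsRootSubsystem refl Φ Ψ' → Ψ ⊆ Ψ' → Ψ' ≠ Φ → Ψ' = Ψ

/-- The maximal root subsystem `Ψ_J` of `B_n`. -/
def PsiJ (n : ℕ) (J : Set (Fin n)) : Set (EuclideanSpace ℝ (Fin n)) :=
  pmE n ∪
    {v | ∃ i j : Fin n, i ≠ j ∧ ((i ∈ J ∧ j ∈ J) ∨ (i ∉ J ∧ j ∉ J)) ∧
      ∃ ε δ : ℝ, (ε = 1 ∨ ε = -1) ∧ (δ = 1 ∨ δ = -1) ∧ v = ε • ee n i + δ • ee n j}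

abbrev IsSign (σ : ℝ) : Prop := σ = 1 ∨ σ = -1

namespace IsSign

variable {σ τ : ℝ}

lemma ne_zero (hσ : IsSign σ) : σ ≠ 0 := by
  rcases hσ with rfl | rfl <;> norm_num [IsSign]

lemma neg (hσ : IsSign σ) : IsSign (-σ) := by
  rcases hσ with rfl | rfl <;> norm_num [IsSign]

lemma mul (hσ : IsSign σ) (hτ : IsSign τ) : IsSign (σ * τ) := by
  rcases hσ with rfl | rfl <;> rcases hτ with rfl | rfl <;> norm_num [IsSign]

lemma mul_self (hσ : IsSign σ) : σ * σ = 1 := by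
  rcases hσ with rfl | rfl <;> norm_num [IsSign]

lemma eq_or_eq_neg (hσ : IsSign σ) (hτ : IsSign τ) : τ = σ ∨ τ = -σ := by
  rcases hσ with rfl | rfl <;> rcases hτ with rfl | rfl <;> norm_num [IsSign]

end IsSign

section Reflection

variable {V : Type*} [NormedAddCommGroup V] [InnerProductSpace ℝ V]

lemma reflV_add_right (α β γ : V) : reflV α (β + γ) = reflV α β + reflV α γ := by
  simp only [reflV, inner_add_left]
  module

lemma reflV_smul_right (α β : V) (c : ℝ) : reflV α (c • β) = c • reflV α β := by
  simp only [reflV, real_inner_smul_left]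
  module

lemma reflV_smul_left {c : ℝ} (hc : c ≠ 0) (α β : V) : reflV (c • α) β = reflV α β := by
  simp only [reflV, real_inner_smul_right, real_inner_smul_left, smul_smul]
  congr 2
  field_simp

lemma reflV_self {α : V} (hα : α ≠ 0) : reflV α α = -α := by
  rw [reflV, mul_div_assoc, div_self (inner_self_ne_zero.2 hα)]
  module

end Reflection

section Coordinates

variable {n : ℕ}

lemma inner_ee (i j : Fin n) : ⟪ee n i, ee n j⟫ = if i = j then 1 else 0 := by
  simp [ee, EuclideanSpace.inner_single_left]

@[simp]
lemma ee_apply (i k : Fin n) : ee n i k = if k = i then 1 else 0 :=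
  PiLp.single_apply 2 ℝ i 1 k

lemma reflV_ee_ee (i k : Fin n) :
    reflV (ee n i) (ee n k) = (if k = i then -1 else 1 : ℝ) • ee n k := by
  by_cases h : k = i
  · subst h
    simp only [reflV, inner_ee, if_true]
    module
  · simp [reflV, inner_ee, h]

lemma reflV_long_ee {i j : Fin n} (hij : i ≠ j) {η : ℝ} (hη : IsSign η) (k : Fin n) :
    reflV (ee n i + η • ee n j) (ee n k) =
      (if k = i ∨ k = j then -η else 1) • ee n (Equiv.swap i j k) := by
  have hnorm : ⟪ee n i + η • ee n j, ee n i + η • ee n j⟫ = 2 := by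
    simp only [inner_add_left, inner_add_right, real_inner_smul_left, real_inner_smul_right,
      inner_ee, hij, hij.symm, if_true, if_false]
    linear_combination hη.mul_self
  rw [reflV, hnorm]
  simp only [inner_add_right, real_inner_smul_right, inner_ee]
  by_cases hki : k = i
  · subst hki
    simp [hij]
  · by_cases hkj : k = j
    · subst hkj
      simp [hki]
      rw [smul_smul, hη.mul_self, one_smul]
      abel
    · simp [hki, hkj, Equiv.swap_apply_of_ne_of_ne hki hkj]

lemma smul_ee_add_smul_ee_eq_smul {ε : ℝ} (hε : IsSign ε) (δ : ℝ) (i j : Fin n) :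
    ε • ee n i + δ • ee n j = ε • (ee n i + (ε * δ) • ee n j) := by
  rw [smul_add, smul_smul, ← mul_assoc, hε.mul_self, one_mul]

lemma mem_pmE_iff {v : EuclideanSpace ℝ (Fin n)} :
    v ∈ pmE n ↔ ∃ i : Fin n, ∃ σ : ℝ, IsSign σ ∧ v = σ • ee n i := by
  constructor
  · rintro ⟨i, rfl | rfl⟩
    · exact ⟨i, 1, Or.inl rfl, (one_smul ℝ _).symm⟩
    · exact ⟨i, -1, Or.inr rfl, (neg_one_smul ℝ _).symm⟩
  · rintro ⟨i, σ, hσ | hσ, rfl⟩ <;> subst hσ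
    · exact ⟨i, Or.inl (one_smul ℝ _)⟩
    · exact ⟨i, Or.inr (neg_one_smul ℝ _)⟩

lemma ne_zero_of_mem_pmE_union_pmEE {v : EuclideanSpace ℝ (Fin n)} (hv : v ∈ pmE n ∪ pmEE n) :
    v ≠ 0 := by
  rcases hv with hv | ⟨i, j, hij, ε, δ, hε, -, rfl⟩
  · obtain ⟨i, σ, hσ, rfl⟩ := mem_pmE_iff.1 hv
    intro h
    simpa [hσ.ne_zero] using congrArg (· i) h
  · intro h
    simpa [hij, IsSign.ne_zero hε] using congrArg (· i) h

end Coordinates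

section PsiJ

variable {n : ℕ} {J : Set (Fin n)}

lemma smul_ee_mem_psiJ (J : Set (Fin n)) (i : Fin n) {σ : ℝ} (hσ : IsSign σ) :
    σ • ee n i ∈ PsiJ n J :=
  Or.inl (mem_pmE_iff.2 ⟨i, σ, hσ, rfl⟩)

lemma long_mem_psiJ {i j : Fin n} (hij : i ≠ j) (hside : i ∈ J ↔ j ∈ J) {ε δ : ℝ}
    (hε : IsSign ε) (hδ : IsSign δ) : ε • ee n i + δ • ee n j ∈ PsiJ n J :=
  Or.inr ⟨i, j, hij, iff_iff_and_or_not_and_not.1 hside, ε, δ, hε, hδ, rfl⟩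

lemma psiJ_subset (J : Set (Fin n)) : PsiJ n J ⊆ pmE n ∪ pmEE n := by
  rintro v (hv | ⟨i, j, hij, -, ε, δ, hε, hδ, rfl⟩)
  · exact Or.inl hv
  · exact Or.inr ⟨i, j, hij, ε, δ, hε, hδ, rfl⟩

lemma mem_iff_mem_of_mem_psiJ {v : EuclideanSpace ℝ (Fin n)} (hv : v ∈ PsiJ n J) {i j : Fin n}
    (hi : v i ≠ 0) (hj : v j ≠ 0) : i ∈ J ↔ j ∈ J := by
  rcases hv with hv | ⟨k, l, -, hkl, ε, δ, -, -, rfl⟩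
  · obtain ⟨k, σ, -, rfl⟩ := mem_pmE_iff.1 hv
    simp only [PiLp.smul_apply, ee_apply, smul_eq_mul, mul_ite, mul_one, mul_zero, ne_eq,
      ite_eq_right_iff, not_forall] at hi hj
    rw [hi.1, hj.1]
  · simp only [PiLp.add_apply, PiLp.smul_apply, ee_apply, smul_eq_mul, mul_ite, mul_one,
      mul_zero, ne_eq] at hi hj
    split_ifs at hi hj <;> subst_vars <;> simp_all <;> tauto

lemma psiJ_ne (hJ : J.Nonempty) (hJu : J ≠ Set.univ) : PsiJ n J ≠ pmE n ∪ pmEE n := by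
  obtain ⟨i, hi⟩ := hJ
  obtain ⟨j, hj⟩ := (Set.ne_univ_iff_exists_notMem J).1 hJu
  have hij : i ≠ j := ne_of_mem_of_not_mem hi hj
  intro h
  have hv : (1 : ℝ) • ee n i + (1 : ℝ) • ee n j ∈ PsiJ n J :=
    h ▸ Or.inr ⟨i, j, hij, 1, 1, Or.inl rfl, Or.inl rfl, rfl⟩
  refine hj ((mem_iff_mem_of_mem_psiJ hv ?_ ?_).1 hi) <;>
    simp [hij, hij.symm]

lemma reflV_mem_psiJ_of_signed_perm {α v : EuclideanSpace ℝ (Fin n)} (π : Equiv.Perm (Fin n))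
    (hπ : ∀ k, π k ∈ J ↔ k ∈ J) (s : Fin n → ℝ) (hs : ∀ k, IsSign (s k))
    (hα : ∀ k, reflV α (ee n k) = s k • ee n (π k)) (hv : v ∈ PsiJ n J) :
    reflV α v ∈ PsiJ n J := by
  rcases hv with hv | ⟨i, j, hij, hside, ε, δ, hε, hδ, rfl⟩
  · obtain ⟨i, σ, hσ, rfl⟩ := mem_pmE_iff.1 hv
    rw [reflV_smul_right, hα, smul_smul]
    exact smul_ee_mem_psiJ J _ (hσ.mul (hs i))
  · rw [reflV_add_right, reflV_smul_right, reflV_smul_right, hα, hα, smul_smul, smul_smul]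
    have hside' : π i ∈ J ↔ π j ∈ J :=
      (hπ i).trans ((iff_iff_and_or_not_and_not.2 hside).trans (hπ j).symm)
    exact long_mem_psiJ (π.injective.ne hij) hside' (IsSign.mul hε (hs i)) (IsSign.mul hδ (hs j))

lemma swap_apply_mem_iff {i j : Fin n} (hside : i ∈ J ↔ j ∈ J) (k : Fin n) :
    Equiv.swap i j k ∈ J ↔ k ∈ J := by
  rw [Equiv.swap_apply_def]
  split_ifs with h₁ h₂ <;> subst_vars <;> tauto

lemma isRootSubsystem_psiJ (hn : 0 < n) (J : Set (Fin n)) :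
    IsRootSubsystem reflV (pmE n ∪ pmEE n) (PsiJ n J) := by
  refine ⟨⟨_, smul_ee_mem_psiJ J ⟨0, hn⟩ (Or.inl rfl)⟩, psiJ_subset J, fun α hα v hv => ?_⟩
  rcases hα with hα | ⟨i, j, hij, hside, ε, δ, hε, hδ, rfl⟩
  · obtain ⟨i, σ, hσ, rfl⟩ := mem_pmE_iff.1 hα
    rw [reflV_smul_left hσ.ne_zero]
    refine reflV_mem_psiJ_of_signed_perm 1 (fun _ => Iff.rfl) _ (fun k => ?_) (reflV_ee_ee i) hv
    split_ifs <;> simp [IsSign]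
  · rw [smul_ee_add_smul_ee_eq_smul hε, reflV_smul_left (IsSign.ne_zero hε)]
    refine reflV_mem_psiJ_of_signed_perm _
      (swap_apply_mem_iff (iff_iff_and_or_not_and_not.2 hside)) _ (fun k => ?_)
      (reflV_long_ee hij (IsSign.mul hε hδ)) hv
    split_ifs
    · exact (IsSign.mul hε hδ).neg
    · exact Or.inl rfl

end PsiJ

section Subsystems

variable {n : ℕ} {Ψ : Set (EuclideanSpace ℝ (Fin n))}

namespace IsRootSubsystem

lemma neg_mem (hΨ : IsRootSubsystem reflV (pmE n ∪ pmEE n) Ψ) {v : EuclideanSpace ℝ (Fin n)}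
    (hv : v ∈ Ψ) : -v ∈ Ψ :=
  reflV_self (ne_zero_of_mem_pmE_union_pmEE (hΨ.2.1 hv)) ▸ hΨ.2.2 v hv v hv

lemma smul_mem_iff (hΨ : IsRootSubsystem reflV (pmE n ∪ pmEE n) Ψ) {σ : ℝ} (hσ : IsSign σ)
    {v : EuclideanSpace ℝ (Fin n)} : σ • v ∈ Ψ ↔ v ∈ Ψ := by
  rcases hσ with rfl | rfl
  · rw [one_smul]
  · rw [neg_one_smul]
    exact ⟨fun h => neg_neg v ▸ hΨ.neg_mem h, hΨ.neg_mem⟩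

lemma ee_mem_of_long_mem (hΨ : IsRootSubsystem reflV (pmE n ∪ pmEE n) Ψ) {i j : Fin n}
    (hij : i ≠ j) {ε δ : ℝ} (hε : IsSign ε) (hδ : IsSign δ) (hα : ε • ee n i + δ • ee n j ∈ Ψ)
    (hi : ee n i ∈ Ψ) : ee n j ∈ Ψ := by
  have h := hΨ.2.2 _ hα _ hi
  rw [smul_ee_add_smul_ee_eq_smul hε, reflV_smul_left hε.ne_zero,
    reflV_long_ee hij (hε.mul hδ), if_pos (Or.inl rfl), Equiv.swap_apply_left] at h
  exact (hΨ.smul_mem_iff (hε.mul hδ).neg).1 h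

end IsRootSubsystem

lemma subset_psiJ {J : Set (Fin n)} (hΨ : Ψ ⊆ pmE n ∪ pmEE n)
    (hside : ∀ i j : Fin n, i ≠ j → ∀ ε δ : ℝ, IsSign ε → IsSign δ →
      ε • ee n i + δ • ee n j ∈ Ψ → (i ∈ J ↔ j ∈ J)) :
    Ψ ⊆ PsiJ n J := by
  intro v hv
  rcases hΨ hv with hv' | ⟨i, j, hij, ε, δ, hε, hδ, rfl⟩
  · exact Or.inl hv'
  · exact long_mem_psiJ hij (hside i j hij ε δ hε hδ hv) hε hδ

def Linked (Ψ : Set (EuclideanSpace ℝ (Fin n))) (i j : Fin n) : Prop :=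
  i = j ∨ (1 : ℝ) • ee n i + (1 : ℝ) • ee n j ∈ Ψ

lemma long_mem_of_long_mem (hcl : ∀ α ∈ Ψ, ∀ β ∈ Ψ, reflV α β ∈ Ψ)
    (hshort : ∀ i, ee n i ∈ Ψ) {i j : Fin n} (hij : i ≠ j) {ε δ ε' δ' : ℝ}
    (hε : IsSign ε) (hδ : IsSign δ) (hε' : IsSign ε') (hδ' : IsSign δ')
    (hα : ε • ee n i + δ • ee n j ∈ Ψ) : ε' • ee n i + δ' • ee n j ∈ Ψ := by
  have neg_left : ∀ {i j : Fin n}, i ≠ j → ∀ {ε δ : ℝ}, ε • ee n i + δ • ee n j ∈ Ψ →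
      (-ε) • ee n i + δ • ee n j ∈ Ψ := by
    intro i j hij ε δ h
    have := hcl _ (hshort i) _ h
    rwa [reflV_add_right, reflV_smul_right, reflV_smul_right, reflV_ee_ee, reflV_ee_ee,
      if_pos rfl, if_neg hij.symm, one_smul, smul_smul, mul_neg_one] at this
  have neg_right : ∀ {ε δ : ℝ}, ε • ee n i + δ • ee n j ∈ Ψ → ε • ee n i + (-δ) • ee n j ∈ Ψ := by
    intro ε δ h
    rw [add_comm] at h ⊢
    exact neg_left hij.symm h
  rcases hε.eq_or_eq_neg hε' with rfl | rfl <;> rcases hδ.eq_or_eq_neg hδ' with rfl | rfl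
  exacts [hα, neg_right hα, neg_left hij hα, neg_left hij (neg_right hα)]

lemma linked_of_long_mem (hcl : ∀ α ∈ Ψ, ∀ β ∈ Ψ, reflV α β ∈ Ψ) (hshort : ∀ i, ee n i ∈ Ψ)
    {i j : Fin n} (hij : i ≠ j) {ε δ : ℝ} (hε : IsSign ε) (hδ : IsSign δ)
    (hα : ε • ee n i + δ • ee n j ∈ Ψ) : Linked Ψ i j :=
  Or.inr (long_mem_of_long_mem hcl hshort hij hε hδ (Or.inl rfl) (Or.inl rfl) hα)

lemma Linked.long_mem (hcl : ∀ α ∈ Ψ, ∀ β ∈ Ψ, reflV α β ∈ Ψ) (hshort : ∀ i, ee n i ∈ Ψ)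
    {i j : Fin n} (h : Linked Ψ i j) (hij : i ≠ j) {ε δ : ℝ} (hε : IsSign ε) (hδ : IsSign δ) :
    ε • ee n i + δ • ee n j ∈ Ψ :=
  long_mem_of_long_mem hcl hshort hij (Or.inl rfl) (Or.inl rfl) hε hδ (h.resolve_left hij)

lemma linked_equivalence (hcl : ∀ α ∈ Ψ, ∀ β ∈ Ψ, reflV α β ∈ Ψ) (hshort : ∀ i, ee n i ∈ Ψ) :
    Equivalence (Linked Ψ) where
  refl _ := Or.inl rfl
  symm := by
    rintro i j (rfl | h)
    · exact Or.inl rfl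
    · rw [add_comm] at h
      exact Or.inr h
  trans := by
    rintro i k j (rfl | hik) (rfl | hkj)
    · exact Or.inl rfl
    · exact Or.inr hkj
    · exact Or.inr hik
    rcases eq_or_ne i j with rfl | hij
    · exact Or.inl rfl
    rcases eq_or_ne i k with rfl | hik'
    · exact Or.inr hkj
    rcases eq_or_ne k j with rfl | hkj'
    · exact Or.inr hik
    -- reflecting `e_k + e_j` in `e_k - e_i` gives `e_i + e_j`
    have hα := long_mem_of_long_mem hcl hshort hik'.symm (Or.inl rfl) (Or.inl rfl) (Or.inl rfl)
      (ε' := 1) (δ' := -1) (Or.inr rfl) (add_comm ((1 : ℝ) • ee n i) _ ▸ hik)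
    rw [one_smul] at hα
    have := hcl _ hα _ hkj
    simp only [reflV_add_right, reflV_smul_right, reflV_long_ee hik'.symm (Or.inr rfl)] at this
    refine Or.inr ?_
    simpa [hij.symm, hkj', Equiv.swap_apply_of_ne_of_ne hkj'.symm hij.symm] using this

lemma linked_of_mem_iff_mem {J : Set (Fin n)} (hsub : PsiJ n J ⊆ Ψ) {i j : Fin n}
    (h : i ∈ J ↔ j ∈ J) : Linked Ψ i j := by
  rcases eq_or_ne i j with rfl | hij
  · exact Or.inl rfl
  · exact Or.inr (hsub (long_mem_psiJ hij h (Or.inl rfl) (Or.inl rfl)))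

lemma union_subset_of_psiJ_subset (hcl : ∀ α ∈ Ψ, ∀ β ∈ Ψ, reflV α β ∈ Ψ) {J : Set (Fin n)}
    (hsub : PsiJ n J ⊆ Ψ) {a b : Fin n} (hab : ¬(a ∈ J ↔ b ∈ J)) {ε δ : ℝ}
    (hε : IsSign ε) (hδ : IsSign δ) (hα : ε • ee n a + δ • ee n b ∈ Ψ) :
    pmE n ∪ pmEE n ⊆ Ψ := by
  have hshort : ∀ i, ee n i ∈ Ψ := fun i => hsub (Or.inl ⟨i, Or.inl rfl⟩)
  have hlinked := linked_equivalence hcl hshort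
  have hab' : Linked Ψ a b :=
    linked_of_long_mem hcl hshort (fun h => hab (h ▸ Iff.rfl)) hε hδ hα
  have hto_a : ∀ i, Linked Ψ i a := by
    intro i
    by_cases hi : i ∈ J ↔ a ∈ J
    · exact linked_of_mem_iff_mem hsub hi
    · exact hlinked.trans (linked_of_mem_iff_mem hsub (by tauto)) (hlinked.symm hab')
  rintro v (hv | ⟨i, j, hij, ε, δ, hε, hδ, rfl⟩)
  · exact hsub (Or.inl hv)
  · exact (hlinked.trans (hto_a i) (hlinked.symm (hto_a j))).long_mem hcl hshort hij hε hδ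

lemma exists_subset_psiJ_of_forall_ee_mem (hΨ : IsRootSubsystem reflV (pmE n ∪ pmEE n) Ψ)
    (hne : Ψ ≠ pmE n ∪ pmEE n) (hshort : ∀ i, ee n i ∈ Ψ) :
    ∃ J : Set (Fin n), J.Nonempty ∧ J ≠ Set.univ ∧ Ψ ⊆ PsiJ n J := by
  have hlinked := linked_equivalence hΨ.2.2 hshort
  obtain ⟨v, hvΦ, hvΨ⟩ := Set.not_subset.1 fun h => hne (hΨ.2.1.antisymm h)
  rcases hvΦ with hv | ⟨p, q, hpq, ε, δ, hε, hδ, rfl⟩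
  · obtain ⟨i, σ, hσ, rfl⟩ := mem_pmE_iff.1 hv
    exact absurd ((hΨ.smul_mem_iff hσ).2 (hshort i)) hvΨ
  refine ⟨{i | Linked Ψ i p}, ⟨p, hlinked.refl p⟩, fun h => hvΨ ?_,
    subset_psiJ hΨ.2.1 fun i j hij ε δ hε hδ h => ?_⟩
  · have hq : q ∈ {i | Linked Ψ i p} := h ▸ Set.mem_univ q
    exact (hlinked.symm hq).long_mem hΨ.2.2 hshort hpq hε hδ
  · have hij := linked_of_long_mem hΨ.2.2 hshort hij hε hδ h
    exact ⟨hlinked.trans (hlinked.symm hij), hlinked.trans hij⟩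

lemma exists_subset_psiJ_of_ee_notMem (hΨ : IsRootSubsystem reflV (pmE n ∪ pmEE n) Ψ)
    {i j : Fin n} (hi : ee n i ∈ Ψ) (hj : ee n j ∉ Ψ) :
    ∃ J : Set (Fin n), J.Nonempty ∧ J ≠ Set.univ ∧ Ψ ⊆ PsiJ n J := by
  refine ⟨{k | ee n k ∈ Ψ}, ⟨i, hi⟩, fun h => hj ?_,
    subset_psiJ hΨ.2.1 fun k l hkl ε δ hε hδ h => ⟨hΨ.ee_mem_of_long_mem hkl hε hδ h, ?_⟩⟩
  · exact (h ▸ Set.mem_univ j : j ∈ {k | ee n k ∈ Ψ})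
  · rw [add_comm] at h
    exact hΨ.ee_mem_of_long_mem hkl.symm hδ hε h

lemma exists_subset_psiJ (hΨ : IsRootSubsystem reflV (pmE n ∪ pmEE n) Ψ)
    (hne : Ψ ≠ pmE n ∪ pmEE n) (hmeet : (Ψ ∩ pmE n).Nonempty) :
    ∃ J : Set (Fin n), J.Nonempty ∧ J ≠ Set.univ ∧ Ψ ⊆ PsiJ n J := by
  obtain ⟨_, hv, hvE⟩ := hmeet
  obtain ⟨i, σ, hσ, rfl⟩ := mem_pmE_iff.1 hvE
  by_cases hshort : ∀ j, ee n j ∈ Ψ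
  · exact exists_subset_psiJ_of_forall_ee_mem hΨ hne hshort
  · obtain ⟨j, hj⟩ := not_forall.1 hshort
    exact exists_subset_psiJ_of_ee_notMem hΨ ((hΨ.smul_mem_iff hσ).1 hv) hj

end Subsystems

lemma isMaximalRootSubsystem_psiJ {n : ℕ} {J : Set (Fin n)} (hJ : J.Nonempty)
    (hJu : J ≠ Set.univ) : IsMaximalRootSubsystem reflV (pmE n ∪ pmEE n) (PsiJ n J) := by
  refine ⟨isRootSubsystem_psiJ hJ.some.pos J, psiJ_ne hJ hJu, fun Ψ hΨ hsub hne => ?_⟩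
  refine (hsub.antisymm fun v hv => ?_).symm
  by_contra hv'
  rcases hΨ.2.1 hv with hshort | ⟨a, b, hab, ε, δ, hε, hδ, rfl⟩
  · exact hv' (Or.inl hshort)
  · have hcross : ¬(a ∈ J ↔ b ∈ J) := fun h => hv' (long_mem_psiJ hab h hε hδ)
    exact hne (hΨ.2.1.antisymm (union_subset_of_psiJ_subset hΨ.2.2 hsub hcross hε hδ hv))

theorem stmt_2_general (n : ℕ) :
    (∀ J : Set (Fin n), J.Nonempty → J ≠ Set.univ →
      IsMaximalRootSubsystem reflV (pmE n ∪ pmEE n) (PsiJ n J)) ∧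
    (∀ Ψ : Set (EuclideanSpace ℝ (Fin n)),
      IsMaximalRootSubsystem reflV (pmE n ∪ pmEE n) Ψ →
      (Ψ ∩ pmE n).Nonempty →
      ∃ J : Set (Fin n), J.Nonempty ∧ J ≠ Set.univ ∧ Ψ = PsiJ n J) := by
  refine ⟨fun J hJ hJu => isMaximalRootSubsystem_psiJ hJ hJu, fun Ψ hΨ hmeet => ?_⟩
  obtain ⟨hsub, hne, hmax⟩ := hΨ
  obtain ⟨J, hJ, hJu, hΨJ⟩ := exists_subset_psiJ hsub hne hmeet
  exact ⟨J, hJ, hJu,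
    (hmax _ (isRootSubsystem_psiJ hJ.some.pos J) hΨJ (psiJ_ne hJ hJu)).symm⟩

/-- For `n ≥ 2` and `B_n = {±e_i} ∪ {±e_i ± e_j : i < j}`:
(1) for every nonempty proper `J ⊊ {1,…,n}`, `Ψ_J` is a maximal root subsystem of `B_n`;
(2) every maximal root subsystem of `B_n` meeting `{±e_i}` equals some `Ψ_J`. -/
theorem stmt_2 (n : ℕ) (hn : 2 ≤ n) :
    (∀ J : Set (Fin n), J.Nonempty → J ≠ Set.univ →
      IsMaximalRootSubsystem reflV (pmE n ∪ pmEE n) (PsiJ n J)) ∧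
    (∀ Ψ : Set (EuclideanSpace ℝ (Fin n)),
      IsMaximalRootSubsystem reflV (pmE n ∪ pmEE n) Ψ →
      (Ψ ∩ pmE n).Nonempty →
      ∃ J : Set (Fin n), J.Nonempty ∧ J ≠ Set.univ ∧ Ψ = PsiJ n J) :=
  stmt_2_general n
end
end

section
/- Assume Λ_s ≠ Λ_ℓ. Let p : Φ̊ → Y be ℤ-linear with p(α) ∈ Λ_s for every α ∈ Φ̊_s and p(α) ∈ Λ_ℓ for every α ∈ Φ̊_ℓ, and let S be maximal among subsets T of the subgroup ⟨Λ_s⟩ generated by Λ_s such that: T is a union of cosets of Λ_ℓ, 0 ∈ T, p(α) + T ⊆ Λ_s for every α ∈ Φ̊_s, and p(α) + T ≠ Λ_s for every α ∈ Φ̊_s. Then Ψ := {(α, p(α)+s) : α ∈ Φ̊_s, s ∈ S} ∪ {(α,λ) : α ∈ Φ̊_ℓ, λ ∈ Λ_ℓ} is a maximal root subsystem of Φ. -/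
/-!
The short roots of `B_n` are the vectors of `ℤⁿ` of squared length `1`, the long ones those of
squared length `2`. The Cartan integers `2⟨β,α⟩/⟨α,α⟩` are integers, even ones when `α` is short,
so reflections preserve both sets, and `Ψ` is closed under reflections because `2⟨Λ_s⟩ ⊆ Λ_ℓ` and
`p` is ℤ-linear.

For maximality: if `v, w` are orthogonal short roots, the long root `v - w` reflects `v` to `w`,
and any two short roots are joined by at most two such steps. Hence a root subsystem `Ψ' ⊇ Ψ` has
fibre `p(w) + T` over every short root `w`, for one set `T ⊇ S` that is a union of `Λ_ℓ`-cosets.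
If `Ψ' ≠ Φ`, then `T` satisfies the conditions defining `S`, so `T = S` and `Ψ' = Ψ`.
-/

open RealInnerProductSpace

noncomputable section

/-- The affine reflection `s_a(b) = b − (2⟨b₁,a₁⟩/⟨a₁,a₁⟩)·a` on `V × Y`. -/
def reflA {V Y : Type*} [NormedAddCommGroup V] [InnerProductSpace ℝ V]
    [AddCommGroup Y] [Module ℝ Y] (a b : V × Y) : V × Y :=
  b - (2 * ⟪b.1, a.1⟫ / ⟪a.1, a.1⟫) • a

/-- `p : Φ̊ → Y` is ℤ-linear: `p(s_α(β)) = p(β) − (2⟨β,α⟩/⟨α,α⟩)·p(α)` for `α, β ∈ Φ̊`. -/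
def IsZLin {V Y : Type*} [NormedAddCommGroup V] [InnerProductSpace ℝ V]
    [AddCommGroup Y] [Module ℝ Y] (Φ₀ : Set V) (p : V → Y) : Prop :=
  ∀ α ∈ Φ₀, ∀ β ∈ Φ₀, p (reflV α β) = p β - (2 * ⟪β, α⟫ / ⟪α, α⟫) • p α

/-- The property of the subsets `T ⊆ ⟨Λ_s⟩` among which `S` is maximal in STATEMENT 8:
`T` is a union of cosets of `Λ_ℓ`, `0 ∈ T`, and `p(α) + T ⊆ Λ_s` and `p(α) + T ≠ Λ_s`
for every short root `α`. -/
def BGoodT (n : ℕ) {Y : Type*} [AddCommGroup Y]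
    (Λs : Set Y) (Λℓ : AddSubgroup Y) (p : EuclideanSpace ℝ (Fin n) → Y)
    (T : Set Y) : Prop :=
  T ⊆ (AddSubgroup.closure Λs : Set Y) ∧
  (0 : Y) ∈ T ∧
  (∀ t ∈ T, ∀ h ∈ Λℓ, t + h ∈ T) ∧
  (∀ α ∈ pmE n, ∀ t ∈ T, p α + t ∈ Λs) ∧
  (∀ α ∈ pmE n, {y | ∃ t ∈ T, y = p α + t} ≠ Λs)

theorem sign_mem_bot {ε : ℝ} (hε : ε = 1 ∨ ε = -1) : ε ∈ (⊥ : Subring ℝ) := by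
  rcases hε with rfl | rfl
  exacts [one_mem _, neg_mem (one_mem _)]

theorem one_le_sq_of_mem_bot {x : ℝ} (hx : x ∈ (⊥ : Subring ℝ)) (h0 : x ≠ 0) : 1 ≤ x ^ 2 := by
  obtain ⟨k, rfl⟩ := Subring.mem_bot.mp hx
  have hk : k ≠ 0 := by exact_mod_cast h0
  have : (1 : ℤ) ≤ k ^ 2 := by nlinarith [Int.one_le_abs hk, sq_abs k]
  exact_mod_cast this

theorem sq_eq_one_of_mem_bot {x : ℝ} (hx : x ∈ (⊥ : Subring ℝ)) (h0 : x ≠ 0) (h2 : x ^ 2 ≤ 2) :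
    x ^ 2 = 1 := by
  obtain ⟨k, rfl⟩ := Subring.mem_bot.mp hx
  have hk : k ≠ 0 := by exact_mod_cast h0
  have hk2 : k ^ 2 ≤ 2 := by exact_mod_cast h2
  have hk1 : |k| ≤ 1 := by nlinarith [sq_abs k, abs_nonneg k]
  have : k ^ 2 = 1 := by rw [← sq_abs, le_antisymm hk1 (Int.one_le_abs hk), one_pow]
  exact_mod_cast this

def intLattice (n : ℕ) : AddSubgroup (EuclideanSpace ℝ (Fin n)) where
  carrier := {v | ∀ i, v i ∈ (⊥ : Subring ℝ)}
  add_mem' ha hb i := add_mem (ha i) (hb i)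
  zero_mem' _ := zero_mem _
  neg_mem' ha i := neg_mem (ha i)

section Lattice

variable {n : ℕ} {v w : EuclideanSpace ℝ (Fin n)}

theorem ee_mem_intLattice (i : Fin n) : ee n i ∈ intLattice n := fun j => by
  by_cases h : j = i <;> simp [ee, h, one_mem, zero_mem]

theorem smul_mem_intLattice {c : ℝ} (hc : c ∈ (⊥ : Subring ℝ)) (hv : v ∈ intLattice n) :
    c • v ∈ intLattice n := fun i => by
  simpa using mul_mem hc (hv i)

theorem inner_mem_bot_of_mem_intLattice (hv : v ∈ intLattice n) (hw : w ∈ intLattice n) :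
    ⟪v, w⟫ ∈ (⊥ : Subring ℝ) := by
  rw [PiLp.inner_apply]
  exact Subring.sum_mem _ fun i _ => by rw [Real.inner_apply]; exact mul_mem (hv i) (hw i)

theorem inner_ee_left (i : Fin n) (v : EuclideanSpace ℝ (Fin n)) : ⟪ee n i, v⟫ = v i := by
  simp [ee, EuclideanSpace.inner_single_left]

theorem inner_ee_self (i : Fin n) : ⟪ee n i, ee n i⟫ = 1 := by
  rw [inner_ee_left]; simp [ee]

theorem inner_ee_of_ne {i j : Fin n} (h : i ≠ j) : ⟪ee n i, ee n j⟫ = 0 := by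
  rw [inner_ee_left]; simp [ee, h.symm]

theorem inner_sub_smul_ee_self (v : EuclideanSpace ℝ (Fin n)) (i : Fin n) :
    ⟪v - v i • ee n i, v - v i • ee n i⟫ = ⟪v, v⟫ - v i ^ 2 := by
  have hii : ee n i i = 1 := by simp [ee]
  simp only [inner_sub_left, inner_sub_right, real_inner_smul_left, real_inner_smul_right,
    inner_ee_left, real_inner_comm (ee n i) v, hii]
  ring

theorem exists_one_le_sq_apply (hv : v ∈ intLattice n) (h0 : v ≠ 0) : ∃ i, 1 ≤ v i ^ 2 := by
  obtain ⟨i, hi⟩ : ∃ i, v i ≠ 0 := by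
    by_contra! h
    exact h0 (by ext i; simp [h i])
  exact ⟨i, one_le_sq_of_mem_bot (hv i) hi⟩

theorem inner_self_of_mem_pmE (hv : v ∈ pmE n) : ⟪v, v⟫ = 1 := by
  obtain ⟨i, rfl | rfl⟩ := hv <;>
    simp only [inner_neg_left, inner_neg_right, inner_ee_self, neg_neg]

theorem inner_self_of_mem_pmEE (hv : v ∈ pmEE n) : ⟪v, v⟫ = 2 := by
  obtain ⟨i, j, hij, ε, δ, hε, hδ, rfl⟩ := hv
  have hε2 : ε * ε = 1 := by rcases hε with rfl | rfl <;> norm_num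
  have hδ2 : δ * δ = 1 := by rcases hδ with rfl | rfl <;> norm_num
  simp only [inner_add_left, inner_add_right, real_inner_smul_left, real_inner_smul_right,
    inner_ee_self, inner_ee_of_ne hij, inner_ee_of_ne hij.symm]
  linarith

theorem not_mem_pmEE_of_mem_pmE (hv : v ∈ pmE n) : v ∉ pmEE n := fun h => by
  have := (inner_self_of_mem_pmE hv).symm.trans (inner_self_of_mem_pmEE h)
  norm_num at this

theorem mem_pmE_iff_s8 : v ∈ pmE n ↔ v ∈ intLattice n ∧ ⟪v, v⟫ = 1 := by
  refine ⟨fun hv => ⟨?_, inner_self_of_mem_pmE hv⟩, fun ⟨hv, h1⟩ => ?_⟩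
  · obtain ⟨i, rfl | rfl⟩ := hv
    exacts [ee_mem_intLattice i, neg_mem (ee_mem_intLattice i)]
  have h0 : v ≠ 0 := by rintro rfl; simp at h1
  obtain ⟨i, hi⟩ := exists_one_le_sq_apply hv h0
  have hrest : v - v i • ee n i = 0 := by
    rw [← real_inner_self_nonpos, inner_sub_smul_ee_self]; linarith
  have hsq : v i ^ 2 = 1 := by
    have := inner_sub_smul_ee_self v i
    rw [hrest, inner_zero_left] at this
    linarith
  rw [sub_eq_zero] at hrest
  rcases sq_eq_one_iff.mp hsq with h | h
  · exact ⟨i, Or.inl (by rw [hrest, h, one_smul])⟩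
  · exact ⟨i, Or.inr (by rw [hrest, h, neg_one_smul])⟩

theorem mem_pmEE_iff : v ∈ pmEE n ↔ v ∈ intLattice n ∧ ⟪v, v⟫ = 2 := by
  refine ⟨fun hv => ⟨?_, inner_self_of_mem_pmEE hv⟩, fun ⟨hv, h2⟩ => ?_⟩
  · obtain ⟨i, j, -, ε, δ, hε, hδ, rfl⟩ := hv
    exact add_mem (smul_mem_intLattice (sign_mem_bot hε) (ee_mem_intLattice i))
      (smul_mem_intLattice (sign_mem_bot hδ) (ee_mem_intLattice j))
  have h0 : v ≠ 0 := by rintro rfl; simp at h2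
  obtain ⟨i, hi⟩ := exists_one_le_sq_apply hv h0
  have hrest := inner_sub_smul_ee_self v i
  have hsq : v i ^ 2 = 1 :=
    sq_eq_one_of_mem_bot (hv i) (by rintro h; rw [h] at hi; norm_num at hi)
      (by linarith [real_inner_self_nonneg (x := v - v i • ee n i)])
  obtain ⟨j, δ, hδ, hj⟩ : ∃ j, ∃ δ : ℝ, (δ = 1 ∨ δ = -1) ∧ v - v i • ee n i = δ • ee n j := by
    have hw : v - v i • ee n i ∈ pmE n :=
      mem_pmE_iff_s8.mpr ⟨sub_mem hv (smul_mem_intLattice (hv i) (ee_mem_intLattice i)), by linarith⟩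
    obtain ⟨j, hj | hj⟩ := hw
    · exact ⟨j, 1, Or.inl rfl, by rw [hj, one_smul]⟩
    · exact ⟨j, -1, Or.inr rfl, by rw [hj, neg_one_smul]⟩
  have hij : i ≠ j := by
    rintro rfl
    have := congrArg (fun u : EuclideanSpace ℝ (Fin n) => u i) hj
    rcases hδ with rfl | rfl <;> simp [ee] at this
  exact ⟨i, j, hij, v i, δ, sq_eq_one_iff.mp hsq, hδ, by rw [← hj]; abel⟩

theorem mem_intLattice_of_mem_roots (hv : v ∈ pmE n ∪ pmEE n) : v ∈ intLattice n := by
  rcases hv with hv | hv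
  exacts [(mem_pmE_iff_s8.mp hv).1, (mem_pmEE_iff.mp hv).1]

theorem ne_zero_of_mem_roots (hv : v ∈ pmE n ∪ pmEE n) : v ≠ 0 := by
  rintro rfl
  rcases hv with h | h
  · simpa using inner_self_of_mem_pmE h
  · simpa using inner_self_of_mem_pmEE h

end Lattice

theorem inner_reflV_self {V : Type*} [NormedAddCommGroup V] [InnerProductSpace ℝ V] {α : V}
    (hα : α ≠ 0) (β : V) : ⟪reflV α β, reflV α β⟫ = ⟪β, β⟫ := by
  have : ⟪α, α⟫ ≠ 0 := inner_self_ne_zero.mpr hα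
  simp only [reflV, inner_sub_left, inner_sub_right, real_inner_smul_left, real_inner_smul_right,
    real_inner_comm α β]
  field_simp
  ring

section Reflections

variable {n : ℕ} {α β : EuclideanSpace ℝ (Fin n)}

theorem cartan_of_mem_pmE (hα : α ∈ pmE n) : 2 * ⟪β, α⟫ / ⟪α, α⟫ = 2 * ⟪β, α⟫ := by
  rw [inner_self_of_mem_pmE hα, div_one]

theorem cartan_of_mem_pmEE (hα : α ∈ pmEE n) : 2 * ⟪β, α⟫ / ⟪α, α⟫ = ⟪β, α⟫ := by
  rw [inner_self_of_mem_pmEE hα, mul_div_cancel_left₀ _ two_ne_zero]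

theorem cartan_mem_bot (hα : α ∈ pmE n ∪ pmEE n) (hβ : β ∈ intLattice n) :
    2 * ⟪β, α⟫ / ⟪α, α⟫ ∈ (⊥ : Subring ℝ) := by
  have hβα := inner_mem_bot_of_mem_intLattice hβ (mem_intLattice_of_mem_roots hα)
  rcases hα with hα | hα
  · rw [cartan_of_mem_pmE hα]; exact mul_mem (natCast_mem _ 2) hβα
  · rwa [cartan_of_mem_pmEE hα]

theorem reflV_mem_intLattice (hα : α ∈ pmE n ∪ pmEE n) (hβ : β ∈ intLattice n) :
    reflV α β ∈ intLattice n :=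
  sub_mem hβ (smul_mem_intLattice (cartan_mem_bot hα hβ) (mem_intLattice_of_mem_roots hα))

theorem reflV_mem_pmE (hα : α ∈ pmE n ∪ pmEE n) (hβ : β ∈ pmE n) : reflV α β ∈ pmE n := by
  rw [mem_pmE_iff_s8] at hβ ⊢
  exact ⟨reflV_mem_intLattice hα hβ.1, by rw [inner_reflV_self (ne_zero_of_mem_roots hα), hβ.2]⟩

theorem reflV_mem_pmEE (hα : α ∈ pmE n ∪ pmEE n) (hβ : β ∈ pmEE n) : reflV α β ∈ pmEE n := by
  rw [mem_pmEE_iff] at hβ ⊢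
  exact ⟨reflV_mem_intLattice hα hβ.1, by rw [inner_reflV_self (ne_zero_of_mem_roots hα), hβ.2]⟩

end Reflections

section Orthogonal

variable {n : ℕ} {v w : EuclideanSpace ℝ (Fin n)}

theorem eq_or_eq_neg_of_inner_ne_zero (hv : v ∈ pmE n) (hw : w ∈ pmE n) (h : ⟪v, w⟫ ≠ 0) :
    w = v ∨ w = -v := by
  obtain ⟨i, rfl | rfl⟩ := hv <;> obtain ⟨j, rfl | rfl⟩ := hw <;>
  · obtain rfl | hij := eq_or_ne i j
    · simp
    · simp [inner_ee_of_ne hij] at h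

theorem exists_inner_eq_zero (hn : 2 ≤ n) (hv : v ∈ pmE n) : ∃ u ∈ pmE n, ⟪v, u⟫ = 0 := by
  have : Nontrivial (Fin n) := Fin.nontrivial_iff_two_le.mpr hn
  obtain ⟨i, rfl | rfl⟩ := hv <;> obtain ⟨j, hj⟩ := exists_ne i
  all_goals exact ⟨ee n j, ⟨j, Or.inl rfl⟩, by simp [inner_ee_of_ne hj.symm]⟩

theorem rel_of_rel_orthogonal (hn : 2 ≤ n)
    {R : EuclideanSpace ℝ (Fin n) → EuclideanSpace ℝ (Fin n) → Prop}
    (htrans : ∀ u v w, R u v → R v w → R u w)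
    (horth : ∀ v ∈ pmE n, ∀ w ∈ pmE n, ⟪v, w⟫ = 0 → R v w) (hv : v ∈ pmE n) (hw : w ∈ pmE n) :
    R v w := by
  by_cases h : ⟪v, w⟫ = 0
  · exact horth v hv w hw h
  obtain ⟨u, hu, hvu⟩ := exists_inner_eq_zero hn hv
  have huw : ⟪u, w⟫ = 0 := by
    rcases eq_or_eq_neg_of_inner_ne_zero hv hw h with rfl | rfl
    · rwa [real_inner_comm]
    · rw [inner_neg_right, real_inner_comm, hvu, neg_zero]
  exact htrans v u w (horth v hv u hu hvu) (horth u hu w hw huw)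

theorem sub_mem_pmEE_of_inner_eq_zero (hv : v ∈ pmE n) (hw : w ∈ pmE n) (h : ⟪v, w⟫ = 0) :
    v - w ∈ pmEE n := by
  rw [mem_pmE_iff_s8] at hv hw
  refine mem_pmEE_iff.mpr ⟨sub_mem hv.1 hw.1, ?_⟩
  rw [inner_sub_left, inner_sub_right, inner_sub_right, hv.2, hw.2, h, real_inner_comm, h]
  norm_num

theorem cartan_sub_of_inner_eq_zero (hv : v ∈ pmE n) (hw : w ∈ pmE n) (h : ⟪v, w⟫ = 0) :
    2 * ⟪v, v - w⟫ / ⟪v - w, v - w⟫ = 1 := by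
  rw [inner_self_of_mem_pmEE (sub_mem_pmEE_of_inner_eq_zero hv hw h), inner_sub_right,
    inner_self_of_mem_pmE hv, h]
  norm_num

theorem reflV_sub_of_inner_eq_zero (hv : v ∈ pmE n) (hw : w ∈ pmE n) (h : ⟪v, w⟫ = 0) :
    reflV (v - w) v = w := by
  rw [reflV, cartan_sub_of_inner_eq_zero hv hw h, one_smul, sub_sub_cancel]

end Orthogonal

section Coefficients

variable {Y : Type*} [AddCommGroup Y] [Module ℝ Y] {Λℓ : AddSubgroup Y} {Λs : Set Y}

theorem smul_mem_of_mem_bot {c : ℝ} (hc : c ∈ (⊥ : Subring ℝ)) {y : Y} (hy : y ∈ Λℓ) :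
    c • y ∈ Λℓ := by
  obtain ⟨k, rfl⟩ := Subring.mem_bot.mp hc
  rw [Int.cast_smul_eq_zsmul]
  exact zsmul_mem hy k

theorem two_mul_smul_mem (h2s : ∀ x ∈ Λs, 2 • x ∈ Λℓ) {m : ℝ} (hm : m ∈ (⊥ : Subring ℝ)) {y : Y}
    (hy : y ∈ AddSubgroup.closure Λs) : (2 * m) • y ∈ Λℓ := by
  have h2y : 2 • y ∈ Λℓ :=
    (AddSubgroup.closure_le (Λℓ.comap (nsmulAddMonoidHom (α := Y) 2))).mpr h2s hy
  rw [mul_comm, mul_smul, ofNat_smul_eq_nsmul]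
  exact smul_mem_of_mem_bot hm h2y

end Coefficients

def affineRoots (n : ℕ) {Y : Type*} [AddCommGroup Y] (Λs : Set Y) (Λℓ : AddSubgroup Y) :
    Set (EuclideanSpace ℝ (Fin n) × Y) :=
  {x | x.1 ∈ pmE n ∧ x.2 ∈ Λs} ∪ {x | x.1 ∈ pmEE n ∧ x.2 ∈ Λℓ}

def shiftedRoots (n : ℕ) {Y : Type*} [AddCommGroup Y] (p : EuclideanSpace ℝ (Fin n) → Y)
    (S : Set Y) (Λℓ : AddSubgroup Y) : Set (EuclideanSpace ℝ (Fin n) × Y) :=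
  {x | ∃ α ∈ pmE n, ∃ s ∈ S, x = (α, p α + s)} ∪ {x | x.1 ∈ pmEE n ∧ x.2 ∈ Λℓ}

def shortFiber (n : ℕ) {Y : Type*} [AddCommGroup Y] (p : EuclideanSpace ℝ (Fin n) → Y)
    (Ψ' : Set (EuclideanSpace ℝ (Fin n) × Y)) : Set Y :=
  {t | ∀ w ∈ pmE n, (w, p w + t) ∈ Ψ'}

section ShiftedRoots

variable {n : ℕ} {Y : Type*} [AddCommGroup Y] {Λℓ : AddSubgroup Y} {Λs : Set Y}
  {p : EuclideanSpace ℝ (Fin n) → Y} {S : Set Y}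

theorem mk_mem_shiftedRoots_iff {α : EuclideanSpace ℝ (Fin n)} {μ : Y} :
    (α, μ) ∈ shiftedRoots n p S Λℓ ↔ α ∈ pmE n ∧ μ - p α ∈ S ∨ α ∈ pmEE n ∧ μ ∈ Λℓ := by
  refine or_congr ⟨?_, fun ⟨hα, hs⟩ => ⟨α, hα, _, hs, by rw [add_sub_cancel]⟩⟩ Iff.rfl
  rintro ⟨β, hβ, s, hs, h⟩
  obtain ⟨rfl, rfl⟩ := Prod.mk.inj h
  exact ⟨hβ, by rwa [add_sub_cancel_left]⟩

theorem snd_mem_of_mk_mem_affineRoots {α : EuclideanSpace ℝ (Fin n)} (hα : α ∈ pmE n) {μ : Y}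
    (h : (α, μ) ∈ affineRoots n Λs Λℓ) : μ ∈ Λs := by
  rcases h with ⟨-, h⟩ | ⟨hα', -⟩
  · exact h
  · exact absurd hα' (not_mem_pmEE_of_mem_pmE hα)

theorem shiftedRoots_ne_affineRoots (hn : 1 ≤ n) (hSs : ∀ α ∈ pmE n, ∀ t ∈ S, p α + t ∈ Λs)
    (hSne : ∀ α ∈ pmE n, {y | ∃ t ∈ S, y = p α + t} ≠ Λs) :
    shiftedRoots n p S Λℓ ≠ affineRoots n Λs Λℓ := by
  intro h
  have hα₀ : ee n ⟨0, hn⟩ ∈ pmE n := ⟨_, Or.inl rfl⟩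
  refine hSne _ hα₀ (Set.Subset.antisymm (fun _ ⟨t, ht, hy⟩ => hy ▸ hSs _ hα₀ t ht)
    fun μ hμ => ?_)
  have : (ee n ⟨0, hn⟩, μ) ∈ shiftedRoots n p S Λℓ := h ▸ Or.inl ⟨hα₀, hμ⟩
  obtain ⟨-, hs⟩ | ⟨hlong, -⟩ := mk_mem_shiftedRoots_iff.mp this
  · exact ⟨_, hs, by rw [add_sub_cancel]⟩
  · exact absurd hlong (not_mem_pmEE_of_mem_pmE hα₀)

variable [Module ℝ Y]

theorem reflA_mk (α β : EuclideanSpace ℝ (Fin n)) (lam μ : Y) :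
    reflA (α, lam) (β, μ) = (reflV α β, μ - (2 * ⟪β, α⟫ / ⟪α, α⟫) • lam) := rfl

theorem reflA_mem_shiftedRoots (hlin : IsZLin (pmE n ∪ pmEE n) p)
    (hpl : ∀ α ∈ pmEE n, p α ∈ Λℓ) (h2s : ∀ x ∈ Λs, 2 • x ∈ Λℓ)
    (hScl : S ⊆ AddSubgroup.closure Λs) (hSadd : ∀ t ∈ S, ∀ h ∈ Λℓ, t + h ∈ S)
    (hSs : ∀ α ∈ pmE n, ∀ t ∈ S, p α + t ∈ Λs) {a b : EuclideanSpace ℝ (Fin n) × Y}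
    (ha : a ∈ shiftedRoots n p S Λℓ) (hb : b ∈ shiftedRoots n p S Λℓ) :
    reflA a b ∈ shiftedRoots n p S Λℓ := by
  obtain ⟨α, lam⟩ := a
  obtain ⟨β, μ⟩ := b
  rw [mk_mem_shiftedRoots_iff] at ha hb
  rw [reflA_mk, mk_mem_shiftedRoots_iff]
  have hαΦ : α ∈ pmE n ∪ pmEE n := ha.imp And.left And.left
  have hβΦ : β ∈ pmE n ∪ pmEE n := hb.imp And.left And.left
  have hβα := inner_mem_bot_of_mem_intLattice (mem_intLattice_of_mem_roots hβΦ)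
    (mem_intLattice_of_mem_roots hαΦ)
  have hc := cartan_mem_bot hαΦ (mem_intLattice_of_mem_roots hβΦ)
  have hp := hlin α hαΦ β hβΦ
  rcases ha with ⟨hα, hlam⟩ | ⟨hα, hlam⟩ <;> rcases hb with ⟨hβ, hμ⟩ | ⟨hβ, hμ⟩
  · refine Or.inl ⟨reflV_mem_pmE hαΦ hβ, ?_⟩
    rw [hp, cartan_of_mem_pmE hα,
      show μ - _ • lam - (p β - _ • p α) = μ - p β + -((2 * ⟪β, α⟫) • (lam - p α)) by module]
    exact hSadd _ hμ _ (neg_mem (two_mul_smul_mem h2s hβα (hScl hlam)))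
  · have hlamΛs : lam ∈ Λs := by simpa using hSs α hα _ hlam
    rw [cartan_of_mem_pmE hα]
    exact Or.inr ⟨reflV_mem_pmEE hαΦ hβ,
      sub_mem hμ (two_mul_smul_mem h2s hβα (AddSubgroup.subset_closure hlamΛs))⟩
  · refine Or.inl ⟨reflV_mem_pmE hαΦ hβ, ?_⟩
    rw [hp, show μ - _ • lam - (p β - _ • p α) = μ - p β + (2 * ⟪β, α⟫ / ⟪α, α⟫) • (p α - lam)
      by module]
    exact hSadd _ hμ _ (smul_mem_of_mem_bot hc (sub_mem (hpl α hα) hlam))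
  · exact Or.inr ⟨reflV_mem_pmEE hαΦ hβ, sub_mem hμ (smul_mem_of_mem_bot hc hlam)⟩

theorem isRootSubsystem_shiftedRoots (hn : 1 ≤ n) (hlin : IsZLin (pmE n ∪ pmEE n) p)
    (hpl : ∀ α ∈ pmEE n, p α ∈ Λℓ) (h2s : ∀ x ∈ Λs, 2 • x ∈ Λℓ)
    (hScl : S ⊆ AddSubgroup.closure Λs) (hS0 : (0 : Y) ∈ S)
    (hSadd : ∀ t ∈ S, ∀ h ∈ Λℓ, t + h ∈ S) (hSs : ∀ α ∈ pmE n, ∀ t ∈ S, p α + t ∈ Λs) :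
    IsRootSubsystem reflA (affineRoots n Λs Λℓ) (shiftedRoots n p S Λℓ) := by
  refine ⟨⟨_, Or.inl ⟨ee n ⟨0, hn⟩, ⟨_, Or.inl rfl⟩, 0, hS0, rfl⟩⟩, ?_,
    fun a ha b hb => reflA_mem_shiftedRoots hlin hpl h2s hScl hSadd hSs ha hb⟩
  rintro _ (⟨α, hα, s, hs, rfl⟩ | hlong)
  exacts [Or.inl ⟨hα, hSs α hα s hs⟩, Or.inr hlong]

theorem reflA_sub_of_inner_eq_zero {v w : EuclideanSpace ℝ (Fin n)} (hv : v ∈ pmE n)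
    (hw : w ∈ pmE n) (h : ⟪v, w⟫ = 0) (lam μ : Y) : reflA (v - w, lam) (v, μ) = (w, μ - lam) := by
  rw [reflA_mk, reflV_sub_of_inner_eq_zero hv hw h, cartan_sub_of_inner_eq_zero hv hw h, one_smul]

theorem IsZLin.sub_mem_of_mem_pmE (hn : 2 ≤ n) (hlin : IsZLin (pmE n ∪ pmEE n) p)
    (hpl : ∀ α ∈ pmEE n, p α ∈ Λℓ) {v w : EuclideanSpace ℝ (Fin n)} (hv : v ∈ pmE n)
    (hw : w ∈ pmE n) : p v - p w ∈ Λℓ := by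
  refine rel_of_rel_orthogonal hn (R := fun v w => p v - p w ∈ Λℓ) ?_ ?_ hv hw
  · intro u v w huv hvw
    simpa using add_mem huv hvw
  · intro v hv w hw h
    have hvw := sub_mem_pmEE_of_inner_eq_zero hv hw h
    have hp := hlin (v - w) (Or.inr hvw) v (Or.inl hv)
    rw [reflV_sub_of_inner_eq_zero hv hw h, cartan_sub_of_inner_eq_zero hv hw h, one_smul] at hp
    rw [hp, sub_sub_cancel]
    exact hpl _ hvw

variable {Ψ' : Set (EuclideanSpace ℝ (Fin n) × Y)}

theorem mk_add_mem_of_mk_mem (hn : 2 ≤ n) (hrefl : ∀ a ∈ Ψ', ∀ b ∈ Ψ', reflA a b ∈ Ψ')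
    (hlong : ∀ γ ∈ pmEE n, ∀ h ∈ Λℓ, (γ, h) ∈ Ψ') {v w : EuclideanSpace ℝ (Fin n)}
    (hv : v ∈ pmE n) (hw : w ∈ pmE n) {μ : Y} (hμ : (v, μ) ∈ Ψ') {h : Y} (hh : h ∈ Λℓ) :
    (w, μ + h) ∈ Ψ' := by
  refine rel_of_rel_orthogonal hn
    (R := fun v w => ∀ μ, (v, μ) ∈ Ψ' → ∀ h ∈ Λℓ, (w, μ + h) ∈ Ψ') ?_ ?_ hv hw μ hμ h hh
  · intro u v w huv hvw μ hμ h hh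
    simpa using hvw _ (huv μ hμ h hh) 0 (zero_mem _)
  · intro v hv w hw hvw μ hμ h hh
    have := hrefl _ (hlong _ (sub_mem_pmEE_of_inner_eq_zero hv hw hvw) (-h) (neg_mem hh)) _ hμ
    rwa [reflA_sub_of_inner_eq_zero hv hw hvw, sub_neg_eq_add] at this

theorem sub_mem_shortFiber (hn : 2 ≤ n) (hlin : IsZLin (pmE n ∪ pmEE n) p)
    (hpl : ∀ α ∈ pmEE n, p α ∈ Λℓ) (hrefl : ∀ a ∈ Ψ', ∀ b ∈ Ψ', reflA a b ∈ Ψ')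
    (hlong : ∀ γ ∈ pmEE n, ∀ h ∈ Λℓ, (γ, h) ∈ Ψ') {v : EuclideanSpace ℝ (Fin n)}
    (hv : v ∈ pmE n) {μ : Y} (hμ : (v, μ) ∈ Ψ') : μ - p v ∈ shortFiber n p Ψ' := by
  intro w hw
  have := mk_add_mem_of_mk_mem hn hrefl hlong hv hw hμ (hlin.sub_mem_of_mem_pmE hn hpl hw hv)
  rwa [show μ + (p w - p v) = p w + (μ - p v) by abel] at this

theorem bGoodT_shortFiber (hn : 2 ≤ n) (hps : ∀ α ∈ pmE n, p α ∈ Λs) (hS0 : (0 : Y) ∈ S)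
    (hΨ' : IsRootSubsystem reflA (affineRoots n Λs Λℓ) Ψ') (hsub : shiftedRoots n p S Λℓ ⊆ Ψ')
    (hne : Ψ' ≠ affineRoots n Λs Λℓ) : BGoodT n Λs Λℓ p (shortFiber n p Ψ') := by
  obtain ⟨-, hΨ'Φ, hrefl⟩ := hΨ'
  have hlong : ∀ γ ∈ pmEE n, ∀ h ∈ Λℓ, (γ, h) ∈ Ψ' := fun γ hγ h hh => hsub (Or.inr ⟨hγ, hh⟩)
  have hα₀ : ee n ⟨0, by omega⟩ ∈ pmE n := ⟨_, Or.inl rfl⟩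
  have hshort : ∀ α ∈ pmE n, ∀ t ∈ shortFiber n p Ψ', p α + t ∈ Λs :=
    fun α hα t ht => snd_mem_of_mk_mem_affineRoots hα (hΨ'Φ (ht α hα))
  refine ⟨fun t ht => ?_, fun w hw => hsub (Or.inl ⟨w, hw, 0, hS0, rfl⟩),
    fun t ht h hh w hw => ?_, hshort, fun α hα hα_eq => hne (hΨ'Φ.antisymm ?_)⟩
  · simpa using sub_mem (AddSubgroup.subset_closure (hshort _ hα₀ t ht))
      (AddSubgroup.subset_closure (hps _ hα₀))
  · simpa [add_assoc] using mk_add_mem_of_mk_mem hn hrefl hlong hw hw (ht w hw) hh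
  · rintro ⟨v, μ⟩ (⟨hv, hμ⟩ | ⟨hv, hμ⟩)
    · rw [← hα_eq] at hμ
      obtain ⟨t, ht, rfl⟩ := hμ
      simpa using mk_add_mem_of_mk_mem hn hrefl hlong hα hv (ht α hα) (zero_mem Λℓ)
    · exact hlong v hv μ hμ

theorem eq_shiftedRoots_of_subset (hn : 2 ≤ n) (hlin : IsZLin (pmE n ∪ pmEE n) p)
    (hps : ∀ α ∈ pmE n, p α ∈ Λs) (hpl : ∀ α ∈ pmEE n, p α ∈ Λℓ) (hS0 : (0 : Y) ∈ S)
    (hSmax : ∀ T : Set Y, BGoodT n Λs Λℓ p T → S ⊆ T → T = S)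
    (hΨ' : IsRootSubsystem reflA (affineRoots n Λs Λℓ) Ψ') (hsub : shiftedRoots n p S Λℓ ⊆ Ψ')
    (hne : Ψ' ≠ affineRoots n Λs Λℓ) : Ψ' = shiftedRoots n p S Λℓ := by
  have hT : shortFiber n p Ψ' = S :=
    hSmax _ (bGoodT_shortFiber hn hps hS0 hΨ' hsub hne)
      fun s hs w hw => hsub (Or.inl ⟨w, hw, s, hs, rfl⟩)
  obtain ⟨-, hΨ'Φ, hrefl⟩ := hΨ'
  have hlong : ∀ γ ∈ pmEE n, ∀ h ∈ Λℓ, (γ, h) ∈ Ψ' := fun γ hγ h hh => hsub (Or.inr ⟨hγ, hh⟩)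
  refine Set.Subset.antisymm (fun ⟨v, μ⟩ hvμ => ?_) hsub
  rw [mk_mem_shiftedRoots_iff]
  rcases hΨ'Φ hvμ with ⟨hv, -⟩ | hlongvμ
  · exact Or.inl ⟨hv, hT ▸ sub_mem_shortFiber hn hlin hpl hrefl hlong hv hvμ⟩
  · exact Or.inr hlongvμ

end ShiftedRoots

theorem stmt_8_general (n : ℕ) (hn : 2 ≤ n) (Y : Type*) [AddCommGroup Y] [Module ℝ Y]
    (Λℓ : AddSubgroup Y) (Λs : Set Y)
    (h2s : ∀ x ∈ Λs, 2 • x ∈ Λℓ)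
    (Φ : Set (EuclideanSpace ℝ (Fin n) × Y))
    (hΦ : Φ = {x | x.1 ∈ pmE n ∧ x.2 ∈ Λs} ∪ {x | x.1 ∈ pmEE n ∧ x.2 ∈ Λℓ})
    (p : EuclideanSpace ℝ (Fin n) → Y)
    (hlin : IsZLin (pmE n ∪ pmEE n) p)
    (hps : ∀ α ∈ pmE n, p α ∈ Λs)
    (hpl : ∀ α ∈ pmEE n, p α ∈ Λℓ)
    (S : Set Y) (hS : BGoodT n Λs Λℓ p S)
    (hSmax : ∀ T : Set Y, BGoodT n Λs Λℓ p T → S ⊆ T → T = S)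
    (Ψ : Set (EuclideanSpace ℝ (Fin n) × Y))
    (hΨ : Ψ = {x | ∃ α ∈ pmE n, ∃ s ∈ S, x = (α, p α + s)} ∪
      {x | x.1 ∈ pmEE n ∧ x.2 ∈ Λℓ}) :
    IsMaximalRootSubsystem reflA Φ Ψ := by
  obtain ⟨hScl, hS0, hSadd, hSs, hSne⟩ := hS
  subst hΦ hΨ
  exact ⟨isRootSubsystem_shiftedRoots (by omega) hlin hpl h2s hScl hS0 hSadd hSs,
    shiftedRoots_ne_affineRoots (by omega) hSs hSne,
    fun Ψ' hΨ' hsub hne => eq_shiftedRoots_of_subset hn hlin hps hpl hS0 hSmax hΨ' hsub hne⟩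

/-- gradient `B_n`, `n ≥ 2`: if `Λ_s ≠ Λ_ℓ`, `p` is ℤ-linear with the
appropriate values, and `S` is maximal among the subsets described by `BGoodT`, then
`Ψ = {(α, p(α)+s) : α short, s ∈ S} ∪ (Φ̊_ℓ ⊕ Λ_ℓ)` is a maximal root subsystem. -/
theorem stmt_8 (n : ℕ) (hn : 2 ≤ n) (Y : Type*) [AddCommGroup Y] [Module ℝ Y]
    [FiniteDimensional ℝ Y]
    (Λℓ : AddSubgroup Y) (Λs : Set Y)
    (h0s : (0 : Y) ∈ Λs) (hsneg : ∀ x ∈ Λs, -x ∈ Λs)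
    (hsl : ∀ x ∈ Λs, ∀ h ∈ Λℓ, x + h ∈ Λs)
    (h2s : ∀ x ∈ Λs, 2 • x ∈ Λℓ)
    (hspan : Submodule.span ℝ Λs = ⊤)
    (Φ : Set (EuclideanSpace ℝ (Fin n) × Y))
    (hΦ : Φ = {x | x.1 ∈ pmE n ∧ x.2 ∈ Λs} ∪ {x | x.1 ∈ pmEE n ∧ x.2 ∈ Λℓ})
    (hne : Λs ≠ (Λℓ : Set Y))
    (p : EuclideanSpace ℝ (Fin n) → Y)
    (hlin : IsZLin (pmE n ∪ pmEE n) p)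
    (hps : ∀ α ∈ pmE n, p α ∈ Λs)
    (hpl : ∀ α ∈ pmEE n, p α ∈ Λℓ)
    (S : Set Y) (hS : BGoodT n Λs Λℓ p S)
    (hSmax : ∀ T : Set Y, BGoodT n Λs Λℓ p T → S ⊆ T → T = S)
    (Ψ : Set (EuclideanSpace ℝ (Fin n) × Y))
    (hΨ : Ψ = {x | ∃ α ∈ pmE n, ∃ s ∈ S, x = (α, p α + s)} ∪
      {x | x.1 ∈ pmEE n ∧ x.2 ∈ Λℓ}) :
    IsMaximalRootSubsystem reflA Φ Ψ :=
  stmt_8_general n hn Y Λℓ Λs h2s Φ hΦ p hlin hps hpl S hS hSmax Ψ hΨ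
end
end
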